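/- Let ℋ=(H,ℰ) be a Canonical Network with Embedded Trees (CNET) for a set 𝒯 of rooted binary phylogenetic X-trees, with hybridization number k≥1 and deletion AAF F. For each T∈𝒯, let I(T) be the set of nodes of T that belong to no path of T between two leaves lying in the same component of F (the root being counted as a leaf). Then |I(T)| ≤ k−1 for every T∈𝒯; consequently, if |𝒯|=3 then |⋃_{T∈𝒯} I(T)| ≤ 3(k−1). -/

import Mathlib

open scoped Classical

/-! ## Finite directed graphs on `ℕ` -/

/-- A finite directed graph with vertices drawn from `ℕ`. -/
structure FinDigraph where
  verts : Finset ℕ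
  edges : Finset (ℕ × ℕ)
deriving DecidableEq

namespace FinDigraph

def Adj (G : FinDigraph) (u v : ℕ) : Prop := (u, v) ∈ G.edges

def indeg (G : FinDigraph) (v : ℕ) : ℕ := (G.edges.filter fun e => e.2 = v).card

def outdeg (G : FinDigraph) (v : ℕ) : ℕ := (G.edges.filter fun e => e.1 = v).card

def Reaches (G : FinDigraph) : ℕ → ℕ → Prop := Relation.ReflTransGen G.Adj

def Acyclic (G : FinDigraph) : Prop := ∀ u v, G.Adj u v → ¬ G.Reaches v u

/-- All edge endpoints are vertices. -/
def WF (G : FinDigraph) : Prop := ∀ e ∈ G.edges, e.1 ∈ G.verts ∧ e.2 ∈ G.verts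

def IsSource (G : FinDigraph) (v : ℕ) : Prop := v ∈ G.verts ∧ G.indeg v = 0

def IsLeaf (G : FinDigraph) (v : ℕ) : Prop := v ∈ G.verts ∧ G.outdeg v = 0

def leaves (G : FinDigraph) : Finset ℕ := G.verts.filter fun v => G.outdeg v = 0

/-- A reticulation: a node of indegree at least 2. -/
def IsRetic (G : FinDigraph) (v : ℕ) : Prop := v ∈ G.verts ∧ 2 ≤ G.indeg v

/-- The hybridization number `∑ (d⁻(v) − 1)` over all nodes `v` with indegree at least 2. -/
def hybNum (G : FinDigraph) : ℕ :=
  ∑ v ∈ G.verts.filter (fun v => 2 ≤ G.indeg v), (G.indeg v - 1)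

end FinDigraph

/-! ## Phylogenetic trees and binary networks (taxa are identified with leaf names) -/

/-- A rooted binary phylogenetic tree: a root of indegree 0 and outdegree 1 from which
everything is reachable; every other node has indegree 1 and outdegree 0 (a leaf) or 2. -/
def IsPhyloTree (T : FinDigraph) : Prop :=
  T.WF ∧ T.Acyclic ∧
  (∃ r, T.IsSource r ∧ T.outdeg r = 1 ∧ ∀ v ∈ T.verts, T.Reaches r v) ∧
  (∀ v ∈ T.verts, T.indeg v = 0 ∨ (T.indeg v = 1 ∧ (T.outdeg v = 0 ∨ T.outdeg v = 2)))

/-- A rooted binary phylogenetic tree whose set of taxa (= leaves) is `X`. -/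
def IsTreeOn (T : FinDigraph) (X : Finset ℕ) : Prop := IsPhyloTree T ∧ T.leaves = X

/-- A binary rooted phylogenetic network: a DAG with a single root of indegree 0 and
outdegree 1 from which everything is reachable; every other node is a leaf
(indegree 1, outdegree 0) or has total degree 3. -/
def IsBinNetwork (N : FinDigraph) : Prop :=
  N.WF ∧ N.Acyclic ∧
  (∃ r, N.IsSource r ∧ N.outdeg r = 1 ∧ ∀ v ∈ N.verts, N.Reaches r v) ∧
  (∀ v ∈ N.verts,
    N.indeg v = 0 ∨ (N.indeg v = 1 ∧ N.outdeg v = 0) ∨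
    (N.indeg v + N.outdeg v = 3 ∧ N.outdeg v ≠ 0))

/-! ## Displaying trees: subdivision embeddings -/

/-- The list of consecutive pairs of a list (the edges of a path). -/
def pathEdges : List ℕ → List (ℕ × ℕ)
  | a :: b :: l => (a, b) :: pathEdges (b :: l)
  | _ => []

/-- Internal vertices of a path. -/
def internals (l : List ℕ) : List ℕ := l.tail.dropLast

/-- The edge set `E` forms a subdivision of the tree `T`, witnessed by the vertex map `φ`
and, for each tree edge, a directed path `P`: suppressing all degree-2 nodes of the graph
formed by `E` yields `T`. -/
def IsSubdivisionVia (T : FinDigraph) (E : Finset (ℕ × ℕ))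
    (φ : ℕ → ℕ) (P : ℕ → ℕ → List ℕ) : Prop :=
  Set.InjOn φ ↑T.verts ∧
  (∀ v, T.IsLeaf v → φ v = v) ∧
  (∀ e ∈ T.edges,
    (P e.1 e.2).head? = some (φ e.1) ∧ (P e.1 e.2).getLast? = some (φ e.2) ∧
    2 ≤ (P e.1 e.2).length ∧ (P e.1 e.2).Nodup ∧
    ∀ d ∈ pathEdges (P e.1 e.2), d ∈ E) ∧
  (∀ d ∈ E, ∃ e ∈ T.edges, d ∈ pathEdges (P e.1 e.2)) ∧
  (∀ e ∈ T.edges, ∀ e' ∈ T.edges, e ≠ e' →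
    ∀ x ∈ internals (P e.1 e.2), x ∉ P e'.1 e'.2) ∧
  (∀ e ∈ T.edges, ∀ x ∈ internals (P e.1 e.2), ∀ w ∈ T.verts, φ w ≠ x)

/-- `N` displays `T`: `T` can be obtained from a subgraph of `N` by contracting edges;
equivalently, some subgraph of `N` is a subdivision of `T` (leaves are kept pointwise). -/
def Displays (N T : FinDigraph) : Prop :=
  ∃ E : Finset (ℕ × ℕ), E ⊆ N.edges ∧
    ∃ (φ : ℕ → ℕ) (P : ℕ → ℕ → List ℕ), IsSubdivisionVia T E φ P

/-- `N` is a hybridization network for the trees `𝒯` on taxa `X`. -/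
def IsHybNetworkFor {ι : Type} (N : FinDigraph) (𝒯 : ι → FinDigraph) (X : Finset ℕ) : Prop :=
  IsBinNetwork N ∧ N.leaves = X ∧ ∀ i, Displays N (𝒯 i)

/-! ## The deletion forest of a network -/

/-- Adjacency after deleting all reticulation edges (edges entering a node of
indegree at least 2), made symmetric. -/
def delAdj (N : FinDigraph) (u v : ℕ) : Prop :=
  ((u, v) ∈ N.edges ∧ N.indeg v ≤ 1) ∨ ((v, u) ∈ N.edges ∧ N.indeg u ≤ 1)

/-- Connectivity after deleting all reticulation edges. -/
def DelReach (N : FinDigraph) : ℕ → ℕ → Prop := Relation.ReflTransGen (delAdj N)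

/-- The deletion forest of a network: delete all reticulation edges, discard components
without taxa, and take the induced partition of the taxa. -/
noncomputable def deletionForest (N : FinDigraph) : Finset (Finset ℕ) :=
  N.leaves.image fun x => N.leaves.filter fun y => DelReach N x y

/-! ## Paths, spans, triples, agreement forests -/

/-- `v` lies on the (undirected) path between the leaves `a` and `b` in the tree `T`. -/
def OnTreePath (T : FinDigraph) (a b v : ℕ) : Prop :=
  (T.Reaches v a ∧ ¬ T.Reaches v b) ∨ (T.Reaches v b ∧ ¬ T.Reaches v a) ∨
  (T.Reaches v a ∧ T.Reaches v b ∧ ∀ w, T.Reaches w a → T.Reaches w b → T.Reaches w v)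

/-- `v` is the lowest common ancestor of `a` and `b` in `T`. -/
def IsLCA (T : FinDigraph) (a b v : ℕ) : Prop :=
  T.Reaches v a ∧ T.Reaches v b ∧ ∀ w, T.Reaches w a → T.Reaches w b → T.Reaches w v

/-- The rooted triple `ab|c` holds in `T`. -/
def Triple (T : FinDigraph) (a b c : ℕ) : Prop :=
  ∃ u v, IsLCA T a b u ∧ IsLCA T a c v ∧ u ≠ v ∧ T.Reaches v u

/-- The restrictions of `T` and `T'` to the taxa in `B` are isomorphic
(same rooted triples). -/
def SameTriples (T T' : FinDigraph) (B : Finset ℕ) : Prop :=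
  ∀ a ∈ B, ∀ b ∈ B, ∀ c ∈ B, (Triple T a b c ↔ Triple T' a b c)

/-- `v` belongs to the minimal subtree `T(B)` of `T` spanning the taxa in `B`. -/
def InSpan (T : FinDigraph) (B : Finset ℕ) (v : ℕ) : Prop :=
  ∃ a ∈ B, ∃ b ∈ B, OnTreePath T a b v

/-- A partition `P` of the taxa is a forest for the tree `T`: its blocks consist of
taxa, cover all taxa, and span node-disjoint subtrees of `T`. -/
def IsForestFor (T : FinDigraph) (P : Finset (Finset ℕ)) : Prop :=
  (∀ B ∈ P, B.Nonempty) ∧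
  (∀ B ∈ P, ∀ x ∈ B, T.IsLeaf x) ∧
  (∀ x, T.IsLeaf x → ∃ B ∈ P, x ∈ B) ∧
  (∀ B ∈ P, ∀ B' ∈ P, B ≠ B' → ∀ v, InSpan T B v → ¬ InSpan T B' v)

/-- `r` is the root of the subtree `T(B)`. -/
def SpanRoot (T : FinDigraph) (B : Finset ℕ) (r : ℕ) : Prop :=
  InSpan T B r ∧ ∀ v, InSpan T B v → T.Reaches r v

/-- Edge of the inheritance graph `IG(𝒯, P)`. -/
def IGAdj {ι : Type} (𝒯 : ι → FinDigraph) (P : Finset (Finset ℕ))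
    (B B' : Finset ℕ) : Prop :=
  B ∈ P ∧ B' ∈ P ∧ B ≠ B' ∧
  ∃ i, ∃ r r', SpanRoot (𝒯 i) B r ∧ SpanRoot (𝒯 i) B' r' ∧ (𝒯 i).Reaches r r'

/-- The inheritance graph contains no directed cycle. -/
def IGAcyclic {ι : Type} (𝒯 : ι → FinDigraph) (P : Finset (Finset ℕ)) : Prop :=
  ∀ B B', IGAdj 𝒯 P B B' → ¬ Relation.ReflTransGen (IGAdj 𝒯 P) B' B

/-- `P` is an agreement forest of the trees `𝒯`. -/
def IsAgreementForest {ι : Type} (𝒯 : ι → FinDigraph) (P : Finset (Finset ℕ)) : Prop :=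
  (∀ i, IsForestFor (𝒯 i) P) ∧ ∀ i j, ∀ B ∈ P, SameTriples (𝒯 i) (𝒯 j) B

/-- `P` is an acyclic agreement forest (AAF) of the trees `𝒯`. -/
def IsAAF {ι : Type} (𝒯 : ι → FinDigraph) (P : Finset (Finset ℕ)) : Prop :=
  IsAgreementForest 𝒯 P ∧ IGAcyclic 𝒯 P

/-! ## Pendant subtrees and chains -/

/-- `Y` is the taxon set of a pendant subtree of `T`. -/
def PendantIn (T : FinDigraph) (Y : Finset ℕ) : Prop :=
  ∃ v ∈ T.verts, ¬ T.IsSource v ∧ Y = T.leaves.filter fun x => T.Reaches v x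

/-- The trees `𝒯` have no nontrivial common pendant subtree. -/
def NoNontrivialCPS {ι : Type} (𝒯 : ι → FinDigraph) : Prop :=
  ¬ ∃ Y : Finset ℕ, 2 ≤ Y.card ∧ (∀ i, PendantIn (𝒯 i) Y) ∧
      ∀ i j, SameTriples (𝒯 i) (𝒯 j) Y

/-- The tuple `xs = (x_1, …, x_q)` is a chain of the tree `T`: with `p_i` the parent
of `x_i`, either `(p_q, …, p_1)` is a directed path of `T`, or `(p_q, …, p_2)` is a
directed path of `T` and `p_1 = p_2`. -/
def ChainIn (T : FinDigraph) (xs : List ℕ) : Prop :=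
  xs ≠ [] ∧ (∀ x ∈ xs, T.IsLeaf x) ∧
  ∃ ps : List ℕ, ps.length = xs.length ∧
    (∀ n (h : n < xs.length) (h' : n < ps.length),
      (ps.get ⟨n, h'⟩, xs.get ⟨n, h⟩) ∈ T.edges) ∧
    (ps.reverse.Chain' (fun a b => (a, b) ∈ T.edges) ∨
      ∃ p q rest, ps = p :: q :: rest ∧ p = q ∧
        (q :: rest).reverse.Chain' (fun a b => (a, b) ∈ T.edges))

/-- A common chain of the trees `𝒯`: a maximal tuple that is a chain of every tree. -/
def CommonChain {ι : Type} (𝒯 : ι → FinDigraph) (xs : List ℕ) : Prop :=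
  (∀ i, ChainIn (𝒯 i) xs) ∧ ∀ ys, (∀ i, ChainIn (𝒯 i) ys) → xs <:+: ys → ys = xs

/-! ## Generators and sides -/

/-- Number of non-leaf children of `v`. -/
noncomputable def nonLeafOutdeg (N : FinDigraph) (v : ℕ) : ℕ :=
  (N.edges.filter fun e => e.1 = v ∧ ¬ N.IsLeaf e.2).card

/-- `v` is suppressed when forming the underlying generator of `N`
(after deleting all leaves it has indegree 1 and outdegree 1). -/
def Suppressed (N : FinDigraph) (v : ℕ) : Prop :=
  v ∈ N.verts ∧ ¬ N.IsLeaf v ∧ N.indeg v = 1 ∧ nonLeafOutdeg N v = 1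

/-- `v` is a node of the underlying generator of `N`. -/
def GenNode (N : FinDigraph) (v : ℕ) : Prop :=
  v ∈ N.verts ∧ ¬ N.IsLeaf v ∧ ¬ Suppressed N v

/-- `l` witnesses the edge side of the underlying generator of `N` running from the
generator node `u` to the generator node `w` (all interior vertices are suppressed). -/
def GenEdgePath (N : FinDigraph) (u w : ℕ) (l : List ℕ) : Prop :=
  GenNode N u ∧ GenNode N w ∧
  l.head? = some u ∧ l.getLast? = some w ∧ 2 ≤ l.length ∧
  l.Chain' (fun a b => (a, b) ∈ N.edges ∧ ¬ N.IsLeaf b) ∧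
  ∀ v ∈ internals l, Suppressed N v

/-- A side of a generator: an edge side or a node side. -/
inductive GenSide : Type
  | edgeSide : ℕ → ℕ → GenSide
  | nodeSide : ℕ → GenSide

/-- `s` is a side of the underlying generator of `N`. -/
def IsSideOf (N : FinDigraph) : GenSide → Prop
  | .edgeSide u w => ∃ l, GenEdgePath N u w l
  | .nodeSide v => GenNode N v ∧ 2 ≤ N.indeg v ∧ nonLeafOutdeg N v = 0

/-- The taxon `x` is on the side `s` of the underlying generator of `N`. -/
def OnSide (N : FinDigraph) (x : ℕ) : GenSide → Prop
  | .edgeSide u w =>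
      N.IsLeaf x ∧ ∃ l, GenEdgePath N u w l ∧ ∃ p ∈ internals l, (p, x) ∈ N.edges
  | .nodeSide v => N.IsLeaf x ∧ (v, x) ∈ N.edges ∧ 2 ≤ N.indeg v ∧ nonLeafOutdeg N v = 0

/-! ## Canonical Networks with Embedded Trees (CNETs) -/

/-- A canonical network with embedded trees: the DAG `H` together with, for every
tree index `i`, the edge set `emb i` of the image of the `i`-th tree, the vertex
embedding `vmap i` and the path system `pmap i` witnessing that the image is a
subdivision of the `i`-th tree. -/
structure CNET (ι : Type) where
  H : FinDigraph
  emb : ι → Finset (ℕ × ℕ)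
  vmap : ι → ℕ → ℕ
  pmap : ι → ℕ → ℕ → List ℕ

/-- Conditions (i)–(viii) of a CNET for the trees `𝒯` over the taxa `X`. -/
def IsCNET {ι : Type} (𝒯 : ι → FinDigraph) (X : Finset ℕ) (𝓗 : CNET ι) : Prop :=
  -- (i) H is a DAG
  𝓗.H.WF ∧ 𝓗.H.Acyclic ∧
  -- (ii) every root has one child
  (∀ v, 𝓗.H.IsSource v → 𝓗.H.outdeg v = 1) ∧
  -- (iii) leaves are bijectively labelled by X (labels identified with leaf names)
  𝓗.H.leaves = X ∧
  -- (iv) each emb i is an image of the tree 𝒯 i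
  (∀ i, 𝓗.emb i ⊆ 𝓗.H.edges ∧
    IsSubdivisionVia (𝒯 i) (𝓗.emb i) (𝓗.vmap i) (𝓗.pmap i)) ∧
  -- (v) every tree image contains an edge incident to a root
  (∀ i, ∃ e ∈ 𝓗.emb i, 𝓗.H.IsSource e.1) ∧
  -- (vi) every edge belongs to some tree image
  (∀ e ∈ 𝓗.H.edges, ∃ i, e ∈ 𝓗.emb i) ∧
  -- (vii) every non-leaf non-root node has exactly two children
  (∀ v ∈ 𝓗.H.verts, 𝓗.H.outdeg v ≠ 0 → 𝓗.H.indeg v ≠ 0 → 𝓗.H.outdeg v = 2) ∧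
  -- (viii) for every non-leaf non-root node some tree image contains both child edges
  (∀ v ∈ 𝓗.H.verts, 𝓗.H.outdeg v ≠ 0 → 𝓗.H.indeg v ≠ 0 →
    ∃ i, ∀ w, (v, w) ∈ 𝓗.H.edges → (v, w) ∈ 𝓗.emb i)

/-- `v` lies, after deleting all reticulation edges, in a component containing a root. -/
def RootComp (H : FinDigraph) (v : ℕ) : Prop := ∃ r, H.IsSource r ∧ DelReach H v r

/-- Equivalence of vertices used for the deletion AAF of a CNET: connectivity after
deleting reticulation edges, with all root components merged (as happens in the
hybridization network induced by the CNET). -/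
def CnetDelEquiv (H : FinDigraph) (u v : ℕ) : Prop :=
  DelReach H u v ∨ (RootComp H u ∧ RootComp H v)

/-- The deletion AAF of a CNET (the deletion forest of its induced network). -/
noncomputable def cnetDeletionAAF (H : FinDigraph) : Finset (Finset ℕ) :=
  H.leaves.image fun x => H.leaves.filter fun y => CnetDelEquiv H x y

/-- `a` and `b` are leaves (the root of `T` counted as a leaf) lying in the same
component of the deletion AAF of the CNET with network `H`. -/
def SameFBlock (H T : FinDigraph) (a b : ℕ) : Prop :=
  (H.IsLeaf a ∧ H.IsLeaf b ∧ CnetDelEquiv H a b) ∨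
  (T.IsSource a ∧ T.IsSource b) ∨
  (T.IsSource a ∧ H.IsLeaf b ∧ RootComp H b) ∨
  (T.IsSource b ∧ H.IsLeaf a ∧ RootComp H a)

/-- `I(T)`: the nodes of the tree `T` lying on no path between two leaves in the same
component of the deletion AAF of the CNET (the root of `T` counted as a leaf). -/
noncomputable def ISet {ι : Type} (𝓗 : CNET ι) (T : FinDigraph) : Finset ℕ :=
  T.verts.filter fun v => ¬ ∃ a b, SameFBlock 𝓗.H T a b ∧ OnTreePath T a b v

/-! ## Signatures of CNETs -/

/-- Vertices lying in a deletion component that contains a taxon or a root. -/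
def InFComp (H : FinDigraph) (v : ℕ) : Prop :=
  ∃ x, (H.IsLeaf x ∨ H.IsSource x) ∧ CnetDelEquiv H v x

/-- The contraction equivalence used to form the signature: the image of every
component of the deletion AAF is contracted to a single node. -/
def ContractEquiv (H : FinDigraph) (u v : ℕ) : Prop :=
  u = v ∨ (InFComp H u ∧ InFComp H v ∧ CnetDelEquiv H u v)

/-- Canonical representative of the contraction class of `v`. -/
noncomputable def kappa (H : FinDigraph) (v : ℕ) : ℕ :=
  if h : (H.verts.filter fun w => ContractEquiv H v w).Nonempty
  then (H.verts.filter fun w => ContractEquiv H v w).min' h else v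

/-- Vertex set of the signature. -/
noncomputable def sigVerts (H : FinDigraph) : Finset ℕ := H.verts.image (kappa H)

/-- Edge multiset of the signature (parallel edges are kept). -/
noncomputable def sigEdges (H : FinDigraph) : Multiset (ℕ × ℕ) :=
  (H.edges.val.map fun e => (kappa H e.1, kappa H e.2)).filter fun e => e.1 ≠ e.2

/-- Multiplicity of the signature edge `(u, v)`. -/
noncomputable def sigMult (H : FinDigraph) (u v : ℕ) : ℕ :=
  ((sigEdges H).filter fun e => e = (u, v)).card

/-- Indegree in the signature. -/
noncomputable def sigIndeg (H : FinDigraph) (v : ℕ) : ℕ :=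
  ((sigEdges H).filter fun e => e.2 = v).card

/-- Hybridization number of the signature. -/
noncomputable def sigHybNum (H : FinDigraph) : ℕ :=
  ∑ v ∈ (sigVerts H).filter (fun v => 2 ≤ sigIndeg H v), (sigIndeg H v - 1)

/-! ## Wiring guesses and descriptions -/

/-- A wiring guess for the image `H(r_C)` of a component root: the number of its parent
edges, which parent edge (if any) each tree image uses, and for each parent edge a tree
for which its top endpoint is a split node. -/
structure WiringGuess (ι : Type) where
  numParents : ℕ
  colourOf : ι → Option ℕ
  splitGuess : ℕ → ι

/-- `x` is a `T`-split node (for the tree with index `i`): both of its child edges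
belong to the image of that tree. -/
def IsTSplit {ι : Type} (𝓗 : CNET ι) (i : ι) (x : ℕ) : Prop :=
  𝓗.H.outdeg x = 2 ∧ ∀ y, (x, y) ∈ 𝓗.H.edges → (x, y) ∈ 𝓗.emb i

/-- The wiring guess `g` holds at the node `w` of the CNET `𝓗`. -/
def GuessHoldsAt {ι : Type} (𝓗 : CNET ι) (w : ℕ) (g : WiringGuess ι) : Prop :=
  ∃ e : ℕ → ℕ,
    Set.InjOn e {j | j < g.numParents} ∧
    (∀ u, (u, w) ∈ 𝓗.H.edges ↔ ∃ j < g.numParents, e j = u) ∧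
    (∀ i j, g.colourOf i = some j ↔ (j < g.numParents ∧ (e j, w) ∈ 𝓗.emb i)) ∧
    (∀ j < g.numParents, IsTSplit 𝓗 (g.splitGuess j) (e j))

/-- `v` is the image `H(r_C)` in `H` of the root of the AAF component with taxa `B`. -/
def IsCompImageRoot (H : FinDigraph) (B : Finset ℕ) (v : ℕ) : Prop :=
  v ∈ H.verts ∧ (∃ x ∈ B, CnetDelEquiv H v x) ∧ (H.indeg v = 0 ∨ 2 ≤ H.indeg v)

/-- A description `(𝒢, F*, 𝒯)`: the deletion AAF `F`, the sets `Inodes i = I(𝒯 i)`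
forming the extension of `F` to `F*`, and the wiring guesses for all component roots
(`none` exactly for the component containing the tree root). -/
structure Description (ι : Type) where
  F : Finset (Finset ℕ)
  Inodes : ι → Finset ℕ
  gF : Finset ℕ → Option (WiringGuess ι)
  gI : ι → ℕ → Option (WiringGuess ι)

/-- The CNET `𝓗` has description `D`. -/
def HasDescription {ι : Type} (𝒯 : ι → FinDigraph) (𝓗 : CNET ι) (D : Description ι) : Prop :=
  cnetDeletionAAF 𝓗.H = D.F ∧
  (∀ i, ISet 𝓗 (𝒯 i) = D.Inodes i) ∧
  (∀ B ∈ D.F,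
    (D.gF B = none ↔ ∃ x ∈ B, RootComp 𝓗.H x) ∧
    ∀ g, D.gF B = some g → ∃ v, IsCompImageRoot 𝓗.H B v ∧ GuessHoldsAt 𝓗 v g) ∧
  (∀ i, ∀ u ∈ D.Inodes i, ∃ g, D.gI i u = some g ∧ GuessHoldsAt 𝓗 (𝓗.vmap i u) g)

/-- Two CNETs are equivalent: their signatures are equal, i.e. there is a
label-preserving isomorphism between their signatures. -/
def CNETEquiv {ι : Type} (𝒯 : ι → FinDigraph) (𝓗₁ 𝓗₂ : CNET ι) : Prop :=
  ∃ θ : ℕ → ℕ,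
    Set.BijOn θ ↑(sigVerts 𝓗₁.H) ↑(sigVerts 𝓗₂.H) ∧
    (∀ u ∈ sigVerts 𝓗₁.H, ∀ v ∈ sigVerts 𝓗₁.H,
      sigMult 𝓗₂.H (θ u) (θ v) = sigMult 𝓗₁.H u v) ∧
    (∀ B ∈ cnetDeletionAAF 𝓗₁.H, ∀ v w : ℕ,
      IsCompImageRoot 𝓗₁.H B v → IsCompImageRoot 𝓗₂.H B w →
      θ (kappa 𝓗₁.H v) = kappa 𝓗₂.H w) ∧
    (∀ i : ι, ∀ u : ℕ, u ∈ ISet 𝓗₁ (𝒯 i) → u ∈ ISet 𝓗₂ (𝒯 i) →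
      θ (kappa 𝓗₁.H (𝓗₁.vmap i u)) = kappa 𝓗₂.H (𝓗₂.vmap i u))

/-! ## Counting wiring guesses (three trees) -/

/-- A structurally possible wiring guess for the image of a node of `I(T)`, where `t`
is the colour of the tree `T`: between 1 and 3 parent edges with disjoint nonempty
colour sets, at least one parent edge of colour `t`, and each split guess taken from
the colour set of the corresponding parent edge. -/
def ValidGuessI (t : Fin 3) (g : WiringGuess (Fin 3)) : Prop :=
  1 ≤ g.numParents ∧ g.numParents ≤ 3 ∧
  (∀ i j, g.colourOf i = some j → j < g.numParents) ∧
  (∀ j < g.numParents, ∃ i, g.colourOf i = some j) ∧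
  g.colourOf t ≠ none ∧
  (∀ j < g.numParents, g.colourOf (g.splitGuess j) = some j)

/-- A structurally possible wiring guess for the image of an AAF component root:
additionally, the union of the colour sets of the parent edges contains all colours. -/
def ValidGuessF (g : WiringGuess (Fin 3)) : Prop :=
  1 ≤ g.numParents ∧ g.numParents ≤ 3 ∧
  (∀ i j, g.colourOf i = some j → j < g.numParents) ∧
  (∀ j < g.numParents, ∃ i, g.colourOf i = some j) ∧
  (∀ i, g.colourOf i ≠ none) ∧
  (∀ j < g.numParents, g.colourOf (g.splitGuess j) = some j)

/-- Two wiring guesses are the same up to renumbering the parent edges. -/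
def GuessIso {ι : Type} (g g' : WiringGuess ι) : Prop :=
  g.numParents = g'.numParents ∧
  ∃ σ : ℕ → ℕ,
    Set.BijOn σ {j | j < g.numParents} {j | j < g.numParents} ∧
    (∀ i, g'.colourOf i = (g.colourOf i).map σ) ∧
    (∀ j < g.numParents, g'.splitGuess (σ j) = g.splitGuess j)

/-! ## Taxa reachable avoiding reticulations -/

/-- There is a directed path from `r` to `x` meeting no reticulation apart
possibly from `r` itself. -/
def PathAvoidRetic (N : FinDigraph) (r x : ℕ) : Prop :=
  ∃ l : List ℕ, l.head? = some r ∧ l.getLast? = some x ∧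
    l.Chain' (fun a b => (a, b) ∈ N.edges) ∧
    ∀ v ∈ l.tail, ¬ N.IsRetic v

/-- `X(r)`: the taxa reachable from `r` by directed paths meeting no reticulation
apart from `r`. -/
noncomputable def XrSet (N : FinDigraph) (r : ℕ) : Finset ℕ :=
  N.leaves.filter fun x => PathAvoidRetic N r x

/-! ## Forests obtained by deleting edges of a tree -/

/-- The partition of the taxa of `T` induced by the connected components of `T`
after deleting the edge set `D`. -/
noncomputable def forestFromDeletion (T : FinDigraph) (D : Finset (ℕ × ℕ)) :
    Finset (Finset ℕ) :=
  T.leaves.image fun x => T.leaves.filter fun y =>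
    Relation.ReflTransGen
      (fun a b => ((a, b) ∈ T.edges ∧ (a, b) ∉ D) ∨ ((b, a) ∈ T.edges ∧ (b, a) ∉ D)) x y

/-!
Call a node of `T` covered when it lies on a path of `T` between two leaves of one block of `F`
(the root of `T` counting as a leaf), so that `I(T)` is the set of uncovered nodes. The root and
all leaves are covered, hence every uncovered node has one parent and two children. At most
`|I(T)| - 1` of these `2|I(T)|` child edges end at an uncovered node, since every node has at most
one parent and some uncovered node has a covered parent; the remaining `|I(T)| + 1` end at the
tops of distinct connected pieces of the covered part, and the piece of the root is one more,
giving at least `|I(T)| + 2` pieces.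

On the network side, each piece contains a taxon or the root of `T`, and the whole tree path
between two leaves of one block is covered, so such leaves lie in one piece. Walking up from a
taxon along non-reticulation edges ends at a root of `H` or at a reticulation, and taxa ending at
the same reticulation, or at any root, lie in one block of `F`. Hence there are at most
`r + 1 ≤ k + 1` pieces, `r` being the number of reticulations.
-/

open Relation

namespace FinDigraph

variable {G : FinDigraph}

theorem mem_leaves {x : ℕ} : x ∈ G.leaves ↔ G.IsLeaf x := Finset.mem_filter

theorem Reaches.antisymm (hAc : G.Acyclic) {x y : ℕ} (hxy : G.Reaches x y)
    (hyx : G.Reaches y x) : x = y := by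
  rcases ReflTransGen.cases_head hxy with rfl | ⟨z, hxz, hzy⟩
  · rfl
  · exact absurd (hzy.trans hyx) (hAc _ _ hxz)

theorem exists_adj_of_indeg_pos {v : ℕ} (h : 0 < G.indeg v) : ∃ u, G.Adj u v := by
  obtain ⟨⟨u, w⟩, hmem⟩ := Finset.card_pos.1 h
  obtain ⟨huw, rfl : w = v⟩ := Finset.mem_filter.1 hmem
  exact ⟨u, huw⟩

theorem one_le_indeg_of_adj {u v : ℕ} (h : G.Adj u v) : 1 ≤ G.indeg v :=
  Finset.card_pos.2 ⟨(u, v), Finset.mem_filter.2 ⟨h, rfl⟩⟩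

theorem eq_of_adj_of_indeg_le_one {u u' v : ℕ} (hv : G.indeg v ≤ 1) (hu : G.Adj u v)
    (hu' : G.Adj u' v) : u = u' := by
  by_contra hne
  have : 1 < G.indeg v := Finset.one_lt_card.2
    ⟨(u, v), Finset.mem_filter.2 ⟨hu, rfl⟩, (u', v), Finset.mem_filter.2 ⟨hu', rfl⟩,
      by simp [hne]⟩
  omega

theorem wellFounded_adj (hWF : G.WF) (hAc : G.Acyclic) : WellFounded G.Adj := by
  refine Subrelation.wf (fun {u v} huv => ?_)
    (InvImage.wf (fun v => (G.verts.filter (G.Reaches · v)).card) wellFounded_lt)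
  refine Finset.card_lt_card ((Finset.ssubset_iff_of_subset fun w hw => ?_).2 ⟨v, ?_, ?_⟩)
  · rw [Finset.mem_filter] at hw ⊢
    exact ⟨hw.1, hw.2.tail huv⟩
  · exact Finset.mem_filter.2 ⟨(hWF _ huv).2, .refl⟩
  · exact fun hv => hAc u v huv (Finset.mem_filter.1 hv).2

theorem exists_adj_of_reaches {S : ℕ → Prop} {ρ v : ℕ} (hρv : G.Reaches ρ v) (hρ : S ρ)
    (hv : ¬ S v) : ∃ x u, G.Adj x u ∧ S x ∧ ¬ S u := by
  induction hρv with
  | refl => exact absurd hρ hv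
  | @tail c v _ hcv ih =>
    by_cases hc : S c
    · exact ⟨c, v, hcv, hc, hv⟩
    · exact ih hc

theorem card_retics_le_hybNum (G : FinDigraph) :
    (G.verts.filter (2 ≤ G.indeg ·)).card ≤ G.hybNum := by
  unfold hybNum
  simpa using Finset.card_nsmul_le_sum _ (fun v => G.indeg v - 1) 1 fun v hv => by
    have := (Finset.mem_filter.1 hv).2
    omega

section InducedConn

variable {S S' : ℕ → Prop} {x y z : ℕ}

def InducedConn (G : FinDigraph) (S : ℕ → Prop) : ℕ → ℕ → Prop :=
  ReflTransGen fun x y => (G.Adj x y ∨ G.Adj y x) ∧ S x ∧ S y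

theorem InducedConn.trans (hxy : G.InducedConn S x y) (hyz : G.InducedConn S y z) :
    G.InducedConn S x z :=
  ReflTransGen.trans hxy hyz

theorem InducedConn.symm (h : G.InducedConn S x y) : G.InducedConn S y x := by
  induction h with
  | refl => exact .refl
  | tail _ hstep ih => exact .head ⟨hstep.1.symm, hstep.2.2, hstep.2.1⟩ ih

theorem InducedConn.mono (hSS' : ∀ v, S v → S' v) (h : G.InducedConn S x y) :
    G.InducedConn S' x y :=
  ReflTransGen.mono (fun _ _ hst => ⟨hst.1, hSS' _ hst.2.1, hSS' _ hst.2.2⟩) _ _ h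

theorem inducedConn_of_reaches {v a : ℕ} (hva : G.Reaches v a)
    (hS : ∀ w, G.Reaches v w → G.Reaches w a → S w) : G.InducedConn S v a := by
  induction hva using ReflTransGen.head_induction_on with
  | refl => exact .refl
  | @head v c hvc hca ih =>
    exact .head ⟨Or.inl hvc, hS v .refl (.head hvc hca), hS c (.single hvc) hca⟩
      (ih fun w hcw hwa => hS w (.head hvc hcw) hwa)

noncomputable def component (G : FinDigraph) (S : ℕ → Prop) (v : ℕ) : Finset ℕ :=
  (G.verts.filter S).filter (G.InducedConn S v)

noncomputable def components (G : FinDigraph) (S : ℕ → Prop) : Finset (Finset ℕ) :=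
  (G.verts.filter S).image (G.component S)

theorem mem_component {v w : ℕ} :
    w ∈ G.component S v ↔ (w ∈ G.verts ∧ S w) ∧ G.InducedConn S v w := by
  simp only [component, Finset.mem_filter]

theorem component_eq_of_inducedConn {v w : ℕ} (h : G.InducedConn S v w) :
    G.component S v = G.component S w := by
  ext u
  simp only [mem_component]
  exact and_congr_right fun _ => ⟨h.symm.trans, h.trans⟩

theorem eq_of_mem_components {C C' : Finset ℕ} (hC : C ∈ G.components S)
    (hC' : C' ∈ G.components S) (hx : x ∈ C) (hy : y ∈ C') (hxy : G.InducedConn S x y) :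
    C = C' := by
  obtain ⟨v, -, rfl⟩ := Finset.mem_image.1 hC
  obtain ⟨v', -, rfl⟩ := Finset.mem_image.1 hC'
  rw [component_eq_of_inducedConn (mem_component.1 hx).2,
    component_eq_of_inducedConn (mem_component.1 hy).2, component_eq_of_inducedConn hxy]

end InducedConn

structure IsTreeAt (T : FinDigraph) (ρ : ℕ) : Prop where
  wf : T.WF
  acyclic : T.Acyclic
  isSource_root : T.IsSource ρ
  reaches_of_mem : ∀ v ∈ T.verts, T.Reaches ρ v
  deg : ∀ v ∈ T.verts, T.indeg v = 0 ∨ (T.indeg v = 1 ∧ (T.outdeg v = 0 ∨ T.outdeg v = 2))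

end FinDigraph

theorem IsPhyloTree.exists_isTreeAt {T : FinDigraph} (h : IsPhyloTree T) :
    ∃ ρ, T.IsTreeAt ρ := by
  obtain ⟨hwf, hac, ⟨ρ, hρ, -, hreach⟩, hdeg⟩ := h
  exact ⟨ρ, hwf, hac, hρ, hreach, hdeg⟩

theorem onTreePath_left {T : FinDigraph} {a b : ℕ} : OnTreePath T a b a := by
  by_cases h : T.Reaches a b
  · exact Or.inr (Or.inr ⟨.refl, h, fun _ hw _ => hw⟩)
  · exact Or.inl ⟨.refl, h⟩

theorem onTreePath_comm {T : FinDigraph} {a b v : ℕ} :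
    OnTreePath T a b v ↔ OnTreePath T b a v := by
  have swap : ∀ {a b}, OnTreePath T a b v → OnTreePath T b a v := by
    rintro a b (h | h | ⟨ha, hb, hmin⟩)
    exacts [Or.inr (Or.inl h), Or.inl h, Or.inr (Or.inr ⟨hb, ha, fun w hwb hwa => hmin w hwa hwb⟩)]
  exact ⟨swap, swap⟩

theorem IsLCA.symm {T : FinDigraph} {a b u : ℕ} (h : IsLCA T a b u) : IsLCA T b a u :=
  ⟨h.2.1, h.1, fun w hwb hwa => h.2.2 w hwa hwb⟩

theorem IsLCA.inducedConn_onTreePath {T : FinDigraph} (hAc : T.Acyclic) {a b u : ℕ}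
    (hu : IsLCA T a b u) : T.InducedConn (OnTreePath T a b) u a := by
  refine FinDigraph.inducedConn_of_reaches hu.1 fun w huw hwa => ?_
  by_cases hwb : T.Reaches w b
  · obtain rfl := FinDigraph.Reaches.antisymm hAc huw (hu.2.2 w hwa hwb)
    exact Or.inr (Or.inr hu)
  · exact Or.inl ⟨hwa, hwb⟩

namespace FinDigraph.IsTreeAt

variable {T : FinDigraph} {ρ : ℕ} (h : T.IsTreeAt ρ)
include h

theorem parent_unique {x x' v : ℕ} (hx : T.Adj x v) (hx' : T.Adj x' v) : x = x' := by
  refine eq_of_adj_of_indeg_le_one ?_ hx hx'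
  rcases h.deg v (h.wf _ hx).2 with h0 | ⟨h1, -⟩ <;> omega

theorem not_adj_root (x : ℕ) : ¬ T.Adj x ρ := fun hx => by
  have := one_le_indeg_of_adj hx
  have := h.isSource_root.2
  omega

theorem outdeg_eq_two {v : ℕ} (hv : v ∈ T.verts) (hvρ : v ≠ ρ) (hleaf : ¬ T.IsLeaf v) :
    T.outdeg v = 2 := by
  rcases h.deg v hv with h0 | ⟨-, h0 | h2⟩
  · rcases ReflTransGen.cases_tail (h.reaches_of_mem v hv) with rfl | ⟨c, -, hcv⟩
    · exact absurd rfl hvρ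
    · have := one_le_indeg_of_adj hcv
      omega
  · exact absurd ⟨hv, h0⟩ hleaf
  · exact h2

theorem reaches_parent {s v x : ℕ} (hsv : T.Reaches s v) (hne : s ≠ v) (hx : T.Adj x v) :
    T.Reaches s x := by
  rcases ReflTransGen.cases_tail hsv with rfl | ⟨c, hsc, hcv⟩
  · exact absurd rfl hne
  · rwa [h.parent_unique hx hcv]

theorem exists_isLCA {a b : ℕ} (ha : a ∈ T.verts) (hb : b ∈ T.verts) : ∃ u, IsLCA T a b u := by
  -- Walk down from the root to `a`: the LCA of `v` and `b` is `v` itself if `v` reaches `b`,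
  -- and otherwise the LCA of the parent of `v` and `b`.
  have hρa := h.reaches_of_mem a ha
  clear ha
  induction hρa with
  | refl => exact ⟨ρ, .refl, h.reaches_of_mem b hb, fun _ hw _ => hw⟩
  | @tail c v _ hcv ih =>
    by_cases hvb : T.Reaches v b
    · exact ⟨v, .refl, hvb, fun _ hw _ => hw⟩
    · obtain ⟨u, huc, hub, hmin⟩ := ih
      refine ⟨u, huc.tail hcv, hub, fun w hwv hwb => hmin w (h.reaches_parent hwv ?_ hcv) hwb⟩
      rintro rfl
      exact hvb hwb

theorem inducedConn_onTreePath {a b v : ℕ} (ha : a ∈ T.verts) (hb : b ∈ T.verts)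
    (hv : OnTreePath T a b v) : T.InducedConn (OnTreePath T a b) v a := by
  have below : ∀ {a b v}, T.Reaches v a → ¬ T.Reaches v b →
      T.InducedConn (OnTreePath T a b) v a := fun hva hvb =>
    inducedConn_of_reaches hva fun w hvw hwa => Or.inl ⟨hwa, fun hwb => hvb (hvw.trans hwb)⟩
  rcases hv with ⟨hva, hvb⟩ | ⟨hvb, hva⟩ | hlca
  · exact below hva hvb
  · obtain ⟨u, hu⟩ := h.exists_isLCA ha hb
    have hbu := ((hu.symm.inducedConn_onTreePath h.acyclic).mono fun _ => onTreePath_comm.1).symm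
    exact ((below hvb hva).mono fun _ => onTreePath_comm.1).trans
      (hbu.trans (hu.inducedConn_onTreePath h.acyclic))
  · exact IsLCA.inducedConn_onTreePath h.acyclic hlca

variable {S : ℕ → Prop}

theorem reaches_of_inducedConn {y z : ℕ} (hy : ∀ x, T.Adj x y → ¬ S x)
    (hyz : T.InducedConn S y z) : T.Reaches y z := by
  induction hyz with
  | refl => exact .refl
  | @tail c z _ hcz ih =>
    rcases hcz.1 with hcz' | hzc
    · exact ih.tail hcz'
    · by_cases hyc : y = c
      · subst hyc
        exact absurd hcz.2.2 (hy z hzc)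
      · exact h.reaches_parent ih hyc hzc

end FinDigraph.IsTreeAt

namespace FinDigraph.IsTreeAt

open Finset

variable {T : FinDigraph} {ρ : ℕ} {S : ℕ → Prop} (h : T.IsTreeAt ρ)
include h

theorem card_edges_from_compl (hρ : S ρ) (hleaf : ∀ v, T.IsLeaf v → S v) :
    (T.edges.filter fun e => ¬ S e.1).card = 2 * (T.verts.filter (¬ S ·)).card := by
  have hmaps : Set.MapsTo Prod.fst (T.edges.filter fun e => ¬ S e.1 : Set (ℕ × ℕ))
      (T.verts.filter (¬ S ·) : Set ℕ) := fun e he => by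
    obtain ⟨he, hSe⟩ := mem_filter.1 he
    exact mem_filter.2 ⟨(h.wf e he).1, hSe⟩
  rw [card_eq_sum_card_fiberwise hmaps, sum_const_nat fun u hu => ?_, mul_comm]
  obtain ⟨hu, hSu⟩ := mem_filter.1 hu
  rw [filter_filter, ← h.outdeg_eq_two hu (by rintro rfl; exact hSu hρ) (hSu ∘ hleaf u)]
  exact congrArg card (filter_congr fun e _ => ⟨And.right, fun he => ⟨he ▸ hSu, he⟩⟩)

theorem card_edges_within_compl_lt (hρ : S ρ) (hU : (T.verts.filter (¬ S ·)).Nonempty) :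
    (T.edges.filter fun e => ¬ S e.1 ∧ ¬ S e.2).card < (T.verts.filter (¬ S ·)).card := by
  obtain ⟨u₀, hu₀⟩ := hU
  obtain ⟨x, u, hxu, hx, hu⟩ := exists_adj_of_reaches
    (h.reaches_of_mem u₀ (mem_filter.1 hu₀).1) hρ (mem_filter.1 hu₀).2
  have hmaps : Set.MapsTo Prod.snd (T.edges.filter fun e => ¬ S e.1 ∧ ¬ S e.2 : Set (ℕ × ℕ))
      ((T.verts.filter (¬ S ·)).erase u : Set ℕ) := fun e he => by
    obtain ⟨he, hS₁, hS₂⟩ := mem_filter.1 he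
    refine mem_erase.2 ⟨fun heu => hS₁ ?_, mem_filter.2 ⟨(h.wf e he).2, hS₂⟩⟩
    have he' : T.Adj e.1 u := heu ▸ he
    rwa [h.parent_unique he' hxu]
  have hinj : Set.InjOn Prod.snd (T.edges.filter fun e => ¬ S e.1 ∧ ¬ S e.2 : Set (ℕ × ℕ)) :=
    fun e he e' he' hee' =>
      Prod.ext (h.parent_unique (mem_filter.1 he).1 (hee' ▸ (mem_filter.1 he').1)) hee'
  calc _ ≤ ((T.verts.filter (¬ S ·)).erase u).card := card_le_card_of_injOn _ hmaps hinj
    _ < _ := card_erase_lt_of_mem (mem_filter.2 ⟨(h.wf _ hxu).2, hu⟩)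

theorem card_edges_into_tops_lt (hρ : S ρ) :
    (T.edges.filter fun e => ¬ S e.1 ∧ S e.2).card <
      (T.verts.filter fun y => S y ∧ ∀ x, T.Adj x y → ¬ S x).card := by
  set B := T.edges.filter fun e => ¬ S e.1 ∧ S e.2
  have hinj : Set.InjOn Prod.snd (B : Set (ℕ × ℕ)) := fun e he e' he' hee' =>
    Prod.ext (h.parent_unique (mem_filter.1 he).1 (hee' ▸ (mem_filter.1 he').1)) hee'
  have hρB : ρ ∉ B.image Prod.snd := by
    simp only [mem_image, not_exists, not_and]
    rintro e he rfl
    exact h.not_adj_root e.1 (mem_filter.1 he).1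
  have hsub : insert ρ (B.image Prod.snd) ⊆
      T.verts.filter fun y => S y ∧ ∀ x, T.Adj x y → ¬ S x := by
    intro y hy
    rcases mem_insert.1 hy with rfl | hy
    · exact mem_filter.2 ⟨h.isSource_root.1, hρ, fun x hx => absurd hx (h.not_adj_root x)⟩
    · obtain ⟨e, he, rfl⟩ := mem_image.1 hy
      obtain ⟨he, hS₁, hS₂⟩ := mem_filter.1 he
      exact mem_filter.2 ⟨(h.wf e he).2, hS₂, fun x hx => by rwa [h.parent_unique hx he]⟩
  calc B.card < (insert ρ (B.image Prod.snd)).card := by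
        rw [card_insert_of_notMem hρB, card_image_of_injOn hinj]
        exact Nat.lt_succ_self _
    _ ≤ _ := card_le_card hsub

theorem card_tops_le_card_components :
    (T.verts.filter fun y => S y ∧ ∀ x, T.Adj x y → ¬ S x).card ≤ (T.components S).card := by
  refine card_le_card_of_injOn (T.component S) (fun y hy => ?_) (fun y hy y' hy' hyy' => ?_)
  · obtain ⟨hyv, hSy, -⟩ := mem_filter.1 hy
    exact mem_image.2 ⟨y, mem_filter.2 ⟨hyv, hSy⟩, rfl⟩
  · obtain ⟨hyv, hSy, hy⟩ := mem_filter.1 hy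
    obtain ⟨hyv', hSy', hy'⟩ := mem_filter.1 hy'
    have hself : y' ∈ T.component S y' := mem_component.2 ⟨⟨hyv', hSy'⟩, .refl⟩
    have hconn : T.InducedConn S y y' := (mem_component.1 (hyy' ▸ hself)).2
    exact Reaches.antisymm h.acyclic (h.reaches_of_inducedConn hy hconn)
      (h.reaches_of_inducedConn hy' hconn.symm)

theorem card_compl_add_two_le_card_components (hρ : S ρ) (hleaf : ∀ v, T.IsLeaf v → S v)
    (hU : (T.verts.filter (¬ S ·)).Nonempty) :
    (T.verts.filter (¬ S ·)).card + 2 ≤ (T.components S).card := by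
  have hsplit := card_filter_add_card_filter_not (s := T.edges.filter fun e => ¬ S e.1)
    (fun e => S e.2)
  simp only [filter_filter] at hsplit
  have := h.card_edges_from_compl hρ hleaf
  have := h.card_edges_within_compl_lt hρ hU
  have := h.card_edges_into_tops_lt hρ
  have := h.card_tops_le_card_components (S := S)
  omega

end FinDigraph.IsTreeAt

section Network

open FinDigraph

variable {H T : FinDigraph} {ρ : ℕ}

def OnBlockPath (H T : FinDigraph) (v : ℕ) : Prop :=
  ∃ a b, SameFBlock H T a b ∧ OnTreePath T a b v

theorem isLeaf_iff_of_leaves_eq (hleq : T.leaves = H.leaves) {x : ℕ} :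
    T.IsLeaf x ↔ H.IsLeaf x := by
  rw [← mem_leaves, hleq, mem_leaves]

theorem mem_verts_of_isLeaf_or_isSource (hleq : T.leaves = H.leaves) {x : ℕ}
    (hx : H.IsLeaf x ∨ T.IsSource x) : x ∈ T.verts :=
  hx.elim (fun hx => ((isLeaf_iff_of_leaves_eq hleq).2 hx).1) And.left

theorem SameFBlock.isLeaf_or_isSource_left {a b : ℕ} (hab : SameFBlock H T a b) :
    H.IsLeaf a ∨ T.IsSource a := by
  rcases hab with ⟨ha, -⟩ | ⟨ha, -⟩ | ⟨ha, -⟩ | ⟨-, ha, -⟩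
  exacts [Or.inl ha, Or.inr ha, Or.inr ha, Or.inl ha]

theorem SameFBlock.isLeaf_or_isSource_right {a b : ℕ} (hab : SameFBlock H T a b) :
    H.IsLeaf b ∨ T.IsSource b := by
  rcases hab with ⟨-, hb, -⟩ | ⟨-, hb⟩ | ⟨-, hb, -⟩ | ⟨hb, -⟩
  exacts [Or.inl hb, Or.inr hb, Or.inl hb, Or.inr hb]

theorem SameFBlock.inducedConn (h : T.IsTreeAt ρ) (hleq : T.leaves = H.leaves) {a b v : ℕ}
    (hab : SameFBlock H T a b) (hv : OnTreePath T a b v) :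
    T.InducedConn (OnBlockPath H T) v a :=
  (h.inducedConn_onTreePath (mem_verts_of_isLeaf_or_isSource hleq hab.isLeaf_or_isSource_left)
    (mem_verts_of_isLeaf_or_isSource hleq hab.isLeaf_or_isSource_right) hv).mono
    fun _ hw => ⟨a, b, hab, hw⟩

theorem onBlockPath_root (h : T.IsTreeAt ρ) : OnBlockPath H T ρ :=
  ⟨ρ, ρ, Or.inr (Or.inl ⟨h.isSource_root, h.isSource_root⟩), onTreePath_left⟩

theorem onBlockPath_of_isLeaf (hleq : T.leaves = H.leaves) {x : ℕ} (hx : T.IsLeaf x) :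
    OnBlockPath H T x :=
  have hx' := (isLeaf_iff_of_leaves_eq hleq).1 hx
  ⟨x, x, Or.inl ⟨hx', hx', Or.inl .refl⟩, onTreePath_left⟩

theorem exists_mem_isLeaf_or_isSource (h : T.IsTreeAt ρ) (hleq : T.leaves = H.leaves)
    {C : Finset ℕ} (hC : C ∈ T.components (OnBlockPath H T)) :
    ∃ x ∈ C, H.IsLeaf x ∨ T.IsSource x := by
  obtain ⟨v, hv, rfl⟩ := Finset.mem_image.1 hC
  obtain ⟨a, b, hab, hva⟩ := (Finset.mem_filter.1 hv).2
  have ha := hab.isLeaf_or_isSource_left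
  refine ⟨a, mem_component.2 ⟨⟨mem_verts_of_isLeaf_or_isSource hleq ha, ?_⟩, ?_⟩, ha⟩
  exacts [⟨a, b, hab, onTreePath_left⟩, hab.inducedConn h hleq hva]

theorem delReach_symm {x y : ℕ} (h : DelReach H x y) : DelReach H y x := by
  induction h with
  | refl => exact .refl
  | tail _ hst ih => exact .head (Or.symm hst) ih

theorem exists_delReach_indeg_ne_one (hWF : H.WF) (hAc : H.Acyclic) {v : ℕ}
    (hv : v ∈ H.verts) : ∃ r ∈ H.verts, H.indeg r ≠ 1 ∧ DelReach H v r := by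
  induction v using (wellFounded_adj hWF hAc).induction with
  | _ v ih =>
    by_cases h1 : H.indeg v = 1
    · obtain ⟨p, hpv⟩ := exists_adj_of_indeg_pos (h1 ▸ Nat.one_pos)
      obtain ⟨r, hr, hr1, hpr⟩ := ih p hpv (hWF _ hpv).1
      exact ⟨r, hr, hr1, .head (Or.inr ⟨hpv, h1.le⟩) hpr⟩
    · exact ⟨v, hv, h1, .refl⟩

/-- `none` tags the block of `F` containing the roots; `some r` tags taxa joined to the
reticulation `r` once all reticulation edges are deleted. -/
def BlockTag (H T : FinDigraph) : Option ℕ → ℕ → Prop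
  | none, x => T.IsSource x ∨ (H.IsLeaf x ∧ RootComp H x)
  | some r, x => H.IsLeaf x ∧ DelReach H x r

theorem BlockTag.sameFBlock {l : Option ℕ} {x y : ℕ} (hx : BlockTag H T l x)
    (hy : BlockTag H T l y) : SameFBlock H T x y := by
  cases l with
  | none =>
    rcases hx with hx | ⟨hxl, hxr⟩ <;> rcases hy with hy | ⟨hyl, hyr⟩
    · exact Or.inr (Or.inl ⟨hx, hy⟩)
    · exact Or.inr (Or.inr (Or.inl ⟨hx, hyl, hyr⟩))
    · exact Or.inr (Or.inr (Or.inr ⟨hy, hxl, hxr⟩))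
    · exact Or.inl ⟨hxl, hyl, Or.inr ⟨hxr, hyr⟩⟩
  | some r => exact Or.inl ⟨hx.1, hy.1, Or.inl (ReflTransGen.trans hx.2 (delReach_symm hy.2))⟩

theorem exists_blockTag (hWF : H.WF) (hAc : H.Acyclic) {x : ℕ}
    (hx : H.IsLeaf x ∨ T.IsSource x) :
    ∃ l ∈ (H.verts.filter (2 ≤ H.indeg ·)).insertNone, BlockTag H T l x := by
  by_cases hroot : T.IsSource x ∨ (H.IsLeaf x ∧ RootComp H x)
  · exact ⟨none, Finset.none_mem_insertNone, hroot⟩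
  have hxl : H.IsLeaf x := hx.resolve_right fun hs => hroot (Or.inl hs)
  obtain ⟨r, hr, hr1, hxr⟩ := exists_delReach_indeg_ne_one hWF hAc hxl.1
  have hr2 : 2 ≤ H.indeg r := by
    by_contra hlt
    exact hroot (Or.inr ⟨hxl, r, ⟨hr, by omega⟩, hxr⟩)
  exact ⟨some r, Finset.some_mem_insertNone.2 (Finset.mem_filter.2 ⟨hr, hr2⟩), hxl, hxr⟩

theorem card_components_onBlockPath_le (h : T.IsTreeAt ρ) (hleq : T.leaves = H.leaves)
    (hWF : H.WF) (hAc : H.Acyclic) :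
    (T.components (OnBlockPath H T)).card ≤ (H.verts.filter (2 ≤ H.indeg ·)).card + 1 := by
  rw [← Finset.card_insertNone]
  refine Finset.card_le_card_of_forall_subsingleton (fun C l => ∃ x ∈ C, BlockTag H T l x)
    (fun C hC => ?_) ?_
  · obtain ⟨x, hxC, hx⟩ := exists_mem_isLeaf_or_isSource h hleq hC
    obtain ⟨l, hl, hlx⟩ := exists_blockTag hWF hAc hx
    exact ⟨l, hl, x, hxC, hlx⟩
  · rintro l - C ⟨hC, x, hxC, hx⟩ C' ⟨hC', y, hyC', hy⟩
    exact eq_of_mem_components hC hC' hxC hyC'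
      ((hx.sameFBlock hy).inducedConn h hleq (onTreePath_comm.1 onTreePath_left)).symm

theorem card_not_onBlockPath_le (h : T.IsTreeAt ρ) (hleq : T.leaves = H.leaves)
    (hWF : H.WF) (hAc : H.Acyclic) :
    (T.verts.filter (¬ OnBlockPath H T ·)).card ≤ H.hybNum - 1 := by
  rcases (T.verts.filter (¬ OnBlockPath H T ·)).eq_empty_or_nonempty with hU | hU
  · simp [hU]
  · have := h.card_compl_add_two_le_card_components (onBlockPath_root h)
      (fun _ => onBlockPath_of_isLeaf hleq) hU
    have := card_components_onBlockPath_le h hleq hWF hAc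
    have := H.card_retics_le_hybNum
    omega

end Network

theorem ISet_card_le_general
    {ι : Type} [Fintype ι]
    (𝒯 : ι → FinDigraph) (X : Finset ℕ)
    (hT : ∀ i, IsTreeOn (𝒯 i) X)
    (𝓗 : CNET ι) (k : ℕ)
    (hC : IsCNET 𝒯 X 𝓗) (hk : 𝓗.H.hybNum = k) :
    (∀ i, (ISet 𝓗 (𝒯 i)).card ≤ k - 1) ∧
    (Fintype.card ι = 3 →
      (Finset.univ.biUnion fun i => ISet 𝓗 (𝒯 i)).card ≤ 3 * (k - 1)) := by
  have hI : ∀ i, (ISet 𝓗 (𝒯 i)).card ≤ k - 1 := fun i => by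
    obtain ⟨ρ, hρ⟩ := (hT i).1.exists_isTreeAt
    have hleq : (𝒯 i).leaves = 𝓗.H.leaves := (hT i).2.trans hC.2.2.2.1.symm
    exact hk ▸ card_not_onBlockPath_le hρ hleq hC.1 hC.2.1
  refine ⟨hI, fun h3 => ?_⟩
  calc _ ≤ ∑ i, (ISet 𝓗 (𝒯 i)).card := Finset.card_biUnion_le
    _ ≤ ∑ _i : ι, (k - 1) := Finset.sum_le_sum fun i _ => hI i
    _ = 3 * (k - 1) := by rw [Finset.sum_const, Finset.card_univ, h3, smul_eq_mul]

/-- Let `ℋ = (H, ℰ)` be a CNET for a set `𝒯` of rooted binary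
phylogenetic `X`-trees, with hybridization number `k ≥ 1` and deletion AAF `F`. For each
tree `T` of `𝒯`, let `I(T)` be the set of nodes of `T` that belong to no path of `T`
between two leaves lying in the same component of `F` (the root being counted as a
leaf). Then `|I(T)| ≤ k − 1` for every tree of `𝒯`; consequently, if `|𝒯| = 3` then
`|⋃_{T ∈ 𝒯} I(T)| ≤ 3(k − 1)`. -/
theorem ISet_card_le
    {ι : Type} [Fintype ι] [DecidableEq ι]
    (𝒯 : ι → FinDigraph) (X : Finset ℕ)
    (hT : ∀ i, IsTreeOn (𝒯 i) X)
    (𝓗 : CNET ι) (k : ℕ)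
    (hC : IsCNET 𝒯 X 𝓗) (hk : 𝓗.H.hybNum = k) (hk1 : 1 ≤ k) :
    (∀ i, (ISet 𝓗 (𝒯 i)).card ≤ k - 1) ∧
    (Fintype.card ι = 3 →
      (Finset.univ.biUnion fun i => ISet 𝓗 (𝒯 i)).card ≤ 3 * (k - 1)) :=
  ISet_card_le_general 𝒯 X hT 𝓗 k hC hk
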